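/- For every nonzero x ∈ ℝ³, letting E = exp(hat(x)), one has vee(E − Eᵀ) = (2 sin ‖x‖ / ‖x‖) • x. In particular the vector vee(E − Eᵀ) points along the Euler axis x. -/

import Mathlib

/-! Since `hat x` is skew-symmetric, `(exp (hat x))ᵀ = exp (-hat x)`, so `E - Eᵀ` is twice the odd
part of the exponential series. From `hat x ^ 3 = -‖x‖² • hat x` every odd power
`hat x ^ (2n+1)` equals `(-‖x‖²)ⁿ • hat x`, and the odd part sums to `sinc ‖x‖ • hat x`, the
sine series divided by `‖x‖`. Finally `vee` inverts `hat`. -/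

open Matrix Real

/-- The hat map sending `x ∈ ℝ³` to the skew-symmetric matrix with `hat x *ᵥ y = x ×₃ y`. -/
def hat (x : Fin 3 → ℝ) : Matrix (Fin 3) (Fin 3) ℝ :=
  !![0, -x 2, x 1; x 2, 0, -x 0; -x 1, x 0, 0]

/-- The vee map, inverse to `hat` on skew-symmetric matrices. -/
def vee (S : Matrix (Fin 3) (Fin 3) ℝ) : Fin 3 → ℝ :=
  ![S 2 1, S 0 2, S 1 0]

/-- The Euclidean norm on ℝ³. -/
noncomputable def enorm3 (x : Fin 3 → ℝ) : ℝ := Real.sqrt (∑ i, x i ^ 2)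

open Nat

theorem Real.hasSum_sinc (θ : ℝ) :
    HasSum (fun n : ℕ => (-θ ^ 2) ^ n / (2 * n + 1)!) (sinc θ) := by
  rcases eq_or_ne θ 0 with rfl | hθ
  · convert hasSum_single 0 fun n hn => ?_ <;> simp_all
  · rw [sinc_of_ne_zero hθ]
    refine ((hasSum_sin θ).div_const θ).congr_fun fun n => ?_
    rw [neg_pow, ← pow_mul, pow_succ]
    field_simp

theorem pow_two_mul_add_one_of_pow_three {R M : Type*} [Monoid R] [Monoid M] [MulAction R M]
    [IsScalarTower R M M] {A : M} {c : R} (h : A ^ 3 = c • A) (n : ℕ) :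
    A ^ (2 * n + 1) = c ^ n • A := by
  induction n with
  | zero => simp
  | succ n ih =>
    rw [show 2 * (n + 1) + 1 = 2 * n + 1 + 2 by ring, pow_add, ih, smul_mul_assoc,
      ← pow_succ' A 2, h, smul_smul, ← pow_succ]

section BanachAlgebra

variable {𝔸 : Type*} [NormedRing 𝔸] [NormedAlgebra ℝ 𝔸] [CompleteSpace 𝔸]

theorem hasSum_exp_sub_exp_neg (A : 𝔸) :
    HasSum (fun n : ℕ => (2 / (2 * n + 1)! : ℝ) • A ^ (2 * n + 1))
      (NormedSpace.exp A - NormedSpace.exp (-A)) := by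
  have hsum := (NormedSpace.exp_series_hasSum_exp' (𝕂 := ℝ) A).sub
    (NormedSpace.exp_series_hasSum_exp' (𝕂 := ℝ) (-A))
  -- the even terms of the two exponential series cancel, leaving the subseries at `2n+1`
  have hodd := ((add_left_injective 1).comp (mul_right_injective₀ two_ne_zero)).hasSum_iff
    (f := fun n : ℕ => ((n ! : ℝ)⁻¹ • A ^ n - (n ! : ℝ)⁻¹ • (-A) ^ n))
    (a := NormedSpace.exp A - NormedSpace.exp (-A)) (fun n hn => by
      obtain ⟨k, rfl⟩ : Even n := by
        simpa [← Nat.not_odd_iff_even, Odd, eq_comm] using hn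
      simp)
  convert hodd.mpr hsum using 1
  funext n
  simp only [Function.comp_apply, Odd.neg_pow ⟨n, rfl⟩, smul_neg, sub_neg_eq_add, ← add_smul]
  rw [← two_mul, div_eq_mul_inv]

theorem exp_sub_exp_neg_of_pow_three {A : 𝔸} {θ : ℝ} (h : A ^ 3 = (-θ ^ 2) • A) :
    NormedSpace.exp A - NormedSpace.exp (-A) = (2 * sinc θ) • A := by
  refine (hasSum_exp_sub_exp_neg A).unique ((((hasSum_sinc θ).mul_left 2).smul_const A).congr_fun
    fun n => ?_)
  rw [pow_two_mul_add_one_of_pow_three h, smul_smul, mul_div_assoc', div_mul_eq_mul_div]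

end BanachAlgebra

section Matrix

attribute [local instance] Matrix.linftyOpNormedRing Matrix.linftyOpNormedAlgebra

theorem Matrix.exp_sub_transpose_exp_of_pow_three {m : Type*} [Fintype m] [DecidableEq m]
    {A : Matrix m m ℝ} (hskew : Aᵀ = -A) {θ : ℝ} (h : A ^ 3 = (-θ ^ 2) • A) :
    NormedSpace.exp A - (NormedSpace.exp A)ᵀ = (2 * sinc θ) • A := by
  rw [← Matrix.exp_transpose, hskew]
  exact exp_sub_exp_neg_of_pow_three h

end Matrix

theorem hat_transpose (x : Fin 3 → ℝ) : (hat x)ᵀ = -hat x := by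
  ext i j
  fin_cases i <;> fin_cases j <;> simp [hat]

theorem enorm3_sq (x : Fin 3 → ℝ) : enorm3 x ^ 2 = x 0 ^ 2 + x 1 ^ 2 + x 2 ^ 2 := by
  rw [enorm3, sq_sqrt (by positivity), Fin.sum_univ_three]

theorem hat_pow_three (x : Fin 3 → ℝ) : hat x ^ 3 = (-enorm3 x ^ 2) • hat x := by
  rw [enorm3_sq]
  ext i j
  fin_cases i <;> fin_cases j <;>
    simp [hat, pow_succ, Matrix.mul_apply, Fin.sum_univ_three] <;> ring

theorem vee_smul_hat (c : ℝ) (x : Fin 3 → ℝ) : vee (c • hat x) = c • x := by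
  ext i
  fin_cases i <;> simp [vee, hat]

theorem enorm3_eq_norm (x : Fin 3 → ℝ) : enorm3 x = ‖WithLp.toLp 2 x‖ := by
  simp [enorm3, EuclideanSpace.norm_eq]

theorem vee_exp_sub_transpose_general (x : Fin 3 → ℝ) :
    vee (NormedSpace.exp (hat x) - (NormedSpace.exp (hat x))ᵀ) =
      (2 * Real.sin (enorm3 x) / enorm3 x) • x := by
  rw [Matrix.exp_sub_transpose_exp_of_pow_three (hat_transpose x) (hat_pow_three x),
    vee_smul_hat]
  rcases eq_or_ne x 0 with rfl | hx
  · simp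
  · rw [sinc_of_ne_zero (by simpa [enorm3_eq_norm] using hx), mul_div_assoc]

/-- For `E = exp (hat x)` with `x ≠ 0`, `vee (E - Eᵀ) = (2 sin ‖x‖ / ‖x‖) • x`:
the vector `vee (E - Eᵀ)` points along the Euler axis `x`. -/
theorem vee_exp_sub_transpose (x : Fin 3 → ℝ) (hx : x ≠ 0) :
    vee (NormedSpace.exp (hat x) - (NormedSpace.exp (hat x))ᵀ) =
      (2 * Real.sin (enorm3 x) / enorm3 x) • x :=
  vee_exp_sub_transpose_general x
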